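/- The Cartan–Serre map CS : C(□^n) → C(Δ^n) is a quasi-isomorphism: the induced map on homology is an isomorphism in every degree. -/

import Mathlib

/-- The three cells of the interval: `[0]`, `[0,1]` (written `mid`), and `[1]`. -/
inductive CubeF : Type
  | zero : CubeF
  | mid : CubeF
  | one : CubeF
  deriving DecidableEq

namespace CartanSerre

/-- Basis elements of the cubical chain complex `C(□^n)`: tensors `x_1 ⊗ ⋯ ⊗ x_n`. -/
abbrev CubeB (n : ℕ) := Fin n → CubeF
/-- The cubical chain complex `C(□^n)` (as the free ℤ-module on its basis). -/
abbrev CubeChain (n : ℕ) := CubeB n →₀ ℤ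
/-- `C(□^n) ⊗ C(□^n)`, modeled as the free ℤ-module on pairs of basis elements. -/
abbrev CubeChain2 (n : ℕ) := (CubeB n × CubeB n) →₀ ℤ
/-- Basis elements of `C(Δ^n)`: strictly increasing tuples `[v_0, …, v_m]` with
`v_i ∈ {0,…,n}`, i.e. nonempty finite subsets of `Fin (n+1)` (`∅` is not used). -/
abbrev SimpB (n : ℕ) := Finset (Fin (n + 1))
/-- The normalized simplicial chain complex `C(Δ^n)`. -/
abbrev SimpChain (n : ℕ) := SimpB n →₀ ℤ
/-- `C(Δ^n) ⊗ C(Δ^n)`. -/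
abbrev SimpChain2 (n : ℕ) := (SimpB n × SimpB n) →₀ ℤ

/-- Degree of a cubical basis element: the number of factors equal to `[0,1]`. -/
def cubeDeg {n : ℕ} (x : CubeB n) : ℕ :=
  (Finset.univ.filter fun i => x i = CubeF.mid).card

/-- Degree of a simplicial basis element `[v_0, …, v_m]`, namely `m`. -/
def simpDeg {n : ℕ} (s : SimpB n) : ℕ := s.card - 1

/-- The cubical boundary on a basis element. -/
noncomputable def cubeBdFun (n : ℕ) (x : CubeB n) : CubeChain n :=
  ∑ i ∈ Finset.univ.filter (fun i => x i = CubeF.mid),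
    ((-1 : ℤ) ^ (Finset.univ.filter fun j => j < i ∧ x j = CubeF.mid).card) •
      (Finsupp.single (Function.update x i CubeF.one) 1 -
        Finsupp.single (Function.update x i CubeF.zero) 1)

/-- The cubical boundary `∂ : C(□^n) → C(□^n)`. -/
noncomputable def cubeBd (n : ℕ) : CubeChain n →ₗ[ℤ] CubeChain n :=
  Finsupp.lift (CubeChain n) ℤ (CubeB n) (cubeBdFun n)

/-- The (normalized) simplicial boundary on a basis element. -/
noncomputable def simpBdFun (n : ℕ) (s : SimpB n) : SimpChain n :=
  if 2 ≤ s.card then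
    ∑ v ∈ s, ((-1 : ℤ) ^ (s.filter fun w => w < v).card) • Finsupp.single (s.erase v) 1
  else 0

/-- The simplicial boundary `∂ : C(Δ^n) → C(Δ^n)`. -/
noncomputable def simpBd (n : ℕ) : SimpChain n →ₗ[ℤ] SimpChain n :=
  Finsupp.lift (SimpChain n) ℤ (SimpB n) (simpBdFun n)

/-- `p(x) - 1` (0-indexed): the first position of a factor `[0]`, or `n` if there is none. -/
def pIdx {n : ℕ} (x : CubeB n) : Fin (n + 1) :=
  ⟨(List.ofFn x).findIdx (fun c => decide (c = CubeF.zero)), by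
    have h : (List.ofFn x).findIdx (fun c => decide (c = CubeF.zero)) ≤ (List.ofFn x).length :=
      List.findIdx_le_length
    simp only [List.length_ofFn] at h
    omega⟩

/-- The vertex set `[q_1 - 1, …, q_m - 1, p(x) - 1]` of the image of `x` under `CS`. -/
def csSet {n : ℕ} (x : CubeB n) : SimpB n :=
  insert (pIdx x) ((Finset.univ.filter fun i => x i = CubeF.mid).image Fin.castSucc)

/-- The Cartan–Serre map `CS` on a cubical basis element. -/
noncomputable def csFun (n : ℕ) (x : CubeB n) : SimpChain n :=
  if ∃ i j : Fin n, i < j ∧ x i = CubeF.zero ∧ x j = CubeF.mid then 0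
  else Finsupp.single (csSet x) 1

/-- The Cartan–Serre chain map `CS : C(□^n) → C(Δ^n)`. -/
noncomputable def csL (n : ℕ) : CubeChain n →ₗ[ℤ] SimpChain n :=
  Finsupp.lift (SimpChain n) ℤ (CubeB n) (csFun n)

/-- The cubical counit `ε_□ : C(□^n) → ℤ`. -/
noncomputable def cubeEps (n : ℕ) : CubeChain n →ₗ[ℤ] ℤ :=
  Finsupp.lift ℤ ℤ (CubeB n) (fun x => if cubeDeg x = 0 then (1 : ℤ) else 0)

/-- The simplicial counit `ε_Δ : C(Δ^n) → ℤ`. -/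
noncomputable def simpEps (n : ℕ) : SimpChain n →ₗ[ℤ] ℤ :=
  Finsupp.lift ℤ ℤ (SimpB n) (fun s => if s.card = 1 then (1 : ℤ) else 0)

/-- Tensor product of two elements of free modules, in the product-basis model. -/
noncomputable def tensorF {α β : Type*} (a : α →₀ ℤ) (b : β →₀ ℤ) : (α × β) →₀ ℤ :=
  a.sum fun i r => b.sum fun j s => Finsupp.single (i, j) (r * s)

/-- Left factor of the Serre diagonal summand indexed by `S`:
factors in `S` contribute `[0,1]`, the other `[0,1]`-factors contribute `[0]`. -/
def serreL {n : ℕ} (x : CubeB n) (S : Finset (Fin n)) : CubeB n := fun i =>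
  if x i = CubeF.mid then (if i ∈ S then CubeF.mid else CubeF.zero) else x i

/-- Right factor of the Serre diagonal summand indexed by `S`. -/
def serreR {n : ℕ} (x : CubeB n) (S : Finset (Fin n)) : CubeB n := fun i =>
  if x i = CubeF.mid then (if i ∈ S then CubeF.one else CubeF.mid) else x i

/-- Koszul sign exponent of the Serre diagonal summand indexed by `S`. -/
def serreSign {n : ℕ} (x : CubeB n) (S : Finset (Fin n)) : ℕ :=
  ((Finset.univ : Finset (Fin n × Fin n)).filter fun p =>
    p.1 < p.2 ∧ x p.1 = CubeF.mid ∧ p.1 ∉ S ∧ p.2 ∈ S).card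

/-- The Serre diagonal `Δ_□` on a basis element: the tensor product (with Koszul
signs) of `Δ[0] = [0]⊗[0]`, `Δ[1] = [1]⊗[1]`, `Δ[0,1] = [0]⊗[0,1] + [0,1]⊗[1]`. -/
noncomputable def serreDiagFun (n : ℕ) (x : CubeB n) : CubeChain2 n :=
  ∑ S ∈ (Finset.univ.filter fun i => x i = CubeF.mid).powerset,
    ((-1 : ℤ) ^ serreSign x S) • Finsupp.single (serreL x S, serreR x S) 1

/-- The Serre diagonal `Δ_□ : C(□^n) → C(□^n) ⊗ C(□^n)`. -/
noncomputable def serreDiag (n : ℕ) : CubeChain n →ₗ[ℤ] CubeChain2 n :=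
  Finsupp.lift (CubeChain2 n) ℤ (CubeB n) (serreDiagFun n)

/-- The Alexander–Whitney coproduct on a basis element:
`Δ_AW [v_0,…,v_m] = Σ_i [v_0,…,v_i] ⊗ [v_i,…,v_m]`. -/
noncomputable def awFun (n : ℕ) (s : SimpB n) : SimpChain2 n :=
  ∑ v ∈ s, Finsupp.single (s.filter fun w => w ≤ v, s.filter fun w => v ≤ w) 1

/-- The Alexander–Whitney coproduct `Δ_AW : C(Δ^n) → C(Δ^n) ⊗ C(Δ^n)`. -/
noncomputable def awDiag (n : ℕ) : SimpChain n →ₗ[ℤ] SimpChain2 n :=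
  Finsupp.lift (SimpChain2 n) ℤ (SimpB n) (awFun n)

/-- `CS ⊗ CS : C(□^n) ⊗ C(□^n) → C(Δ^n) ⊗ C(Δ^n)` (no Koszul signs: `CS` has degree 0). -/
noncomputable def cs2L (n : ℕ) : CubeChain2 n →ₗ[ℤ] SimpChain2 n :=
  Finsupp.lift (SimpChain2 n) ℤ (CubeB n × CubeB n)
    (fun p => tensorF (csFun n p.1) (csFun n p.2))

/-- The join on single cube factors: `[0] ∗ [1] = [0,1]`, `[1] ∗ [0] = -[0,1]`,
all other joins of basis elements vanish (the outcome factor being `[0,1]`). -/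
def joinF : CubeF → CubeF → ℤ
  | CubeF.zero, CubeF.one => 1
  | CubeF.one, CubeF.zero => -1
  | _, _ => 0

/-- The cubical join `∗` on basis elements. -/
noncomputable def cubeJoinFun (n : ℕ) (x y : CubeB n) : CubeChain n :=
  ((-1 : ℤ) ^ cubeDeg x) •
    ∑ l : Fin n,
      ((if (∀ j, j < l → y j ≠ CubeF.mid) ∧ (∀ j, l < j → x j ≠ CubeF.mid) then (1 : ℤ) else 0) *
          joinF (x l) (y l)) •
        Finsupp.single (fun j => if j < l then x j else if j = l then CubeF.mid else y j) 1

/-- The cubical join, extended bilinearly to chains. -/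
noncomputable def cubeJoinC (n : ℕ) (a b : CubeChain n) : CubeChain n :=
  a.sum fun x r => b.sum fun y s => (r * s) • cubeJoinFun n x y

/-- The simplicial join `∗` on basis elements: `0` if the vertex sets meet, and
otherwise `(-1)^{p + |σ|}` times the union, `|σ|` counting the inversions. -/
noncomputable def simpJoinFun (n : ℕ) (s t : SimpB n) : SimpChain n :=
  if s ∩ t = ∅ ∧ s.Nonempty ∧ t.Nonempty then
    ((-1 : ℤ) ^ ((s.card - 1) + ((s ×ˢ t).filter fun p => p.2 < p.1).card)) •
      Finsupp.single (s ∪ t) 1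
  else 0

/-- The simplicial join, extended bilinearly to chains. -/
noncomputable def simpJoinC (n : ℕ) (a b : SimpChain n) : SimpChain n :=
  a.sum fun s r => b.sum fun t u => (r * u) • simpJoinFun n s t

/-- The linear order `[0] < [0,1] < [1]` on interval cells, via `0 < 1 < 2`. -/
def cellVal : CubeF → ℕ
  | CubeF.zero => 0
  | CubeF.mid => 1
  | CubeF.one => 2

/-- The componentwise partial order on cubical basis elements,
with `[0] < [0,1] < [1]` on each factor. -/
def cubeLe {n : ℕ} (x y : CubeB n) : Prop := ∀ i, cellVal (x i) ≤ cellVal (y i)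

/-- Left-parenthesized iterated join of a nonempty list (the base case `[]` is junk). -/
noncomputable def foldJoin {C : Type*} (join : C → C → C) (z : C) : List C → C
  | [] => z
  | a :: l => l.foldl join a

/-- Left-parenthesized iterated cubical join `∗^{k}` of `k+1` basis elements. -/
noncomputable def iterCubeJoin (n k : ℕ) (f : Fin (k + 1) → CubeB n) : CubeChain n :=
  foldJoin (cubeJoinC n) 0 (List.ofFn fun i : Fin (k + 1) => (Finsupp.single (f i) 1 : CubeChain n))

/-- Left-parenthesized iterated simplicial join `∗^{k}` of `k+1` chains. -/
noncomputable def iterSimpJoin (n k : ℕ) (g : Fin (k + 1) → SimpChain n) : SimpChain n :=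
  foldJoin (simpJoinC n) 0 (List.ofFn g)

/-- The iterated Serre diagonal `Δ_□^k` on a basis element, with `k+1` output factors
(iterated on the last factor; this is unambiguous by coassociativity, and no Koszul
signs appear since `Δ_□` has degree `0`). -/
noncomputable def serreIterFun (n : ℕ) : (k : ℕ) → CubeB n → ((Fin (k + 1) → CubeB n) →₀ ℤ)
  | 0, x => Finsupp.single (fun _ => x) 1
  | k + 1, x =>
    (serreIterFun n k x).sum fun f c =>
      (serreDiagFun n (f (Fin.last k))).sum fun p d =>
        Finsupp.single
          (fun i : Fin (k + 2) =>
            if h : (i : ℕ) < k then f ⟨(i : ℕ), by omega⟩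
            else if (i : ℕ) = k then p.1 else p.2) (c * d)

/-- The iterated Serre diagonal `Δ_□^k : C(□^n) → C(□^n)^{⊗(k+1)}`. -/
noncomputable def serreIter (n k : ℕ) : CubeChain n →ₗ[ℤ] ((Fin (k + 1) → CubeB n) →₀ ℤ) :=
  Finsupp.lift _ ℤ (CubeB n) (serreIterFun n k)

/-- The iterated Alexander–Whitney coproduct `Δ_AW^k` on a basis element. -/
noncomputable def awIterFun (n : ℕ) : (k : ℕ) → SimpB n → ((Fin (k + 1) → SimpB n) →₀ ℤ)
  | 0, s => Finsupp.single (fun _ => s) 1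
  | k + 1, s =>
    (awIterFun n k s).sum fun f c =>
      (awFun n (f (Fin.last k))).sum fun p d =>
        Finsupp.single
          (fun i : Fin (k + 2) =>
            if h : (i : ℕ) < k then f ⟨(i : ℕ), by omega⟩
            else if (i : ℕ) = k then p.1 else p.2) (c * d)

/-- The iterated Alexander–Whitney coproduct `Δ_AW^k : C(Δ^n) → C(Δ^n)^{⊗(k+1)}`. -/
noncomputable def awIter (n k : ℕ) : SimpChain n →ₗ[ℤ] ((Fin (k + 1) → SimpB n) →₀ ℤ) :=
  Finsupp.lift _ ℤ (SimpB n) (awIterFun n k)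

/-- The action of a permutation `τ` on a `k`-fold tensor of basis elements,
with the Koszul sign determined by the degrees of the factors it transposes. -/
noncomputable def koszulPermFun {α : Type*} (deg : α → ℕ) {k : ℕ} (τ : Equiv.Perm (Fin k))
    (f : Fin k → α) : (Fin k → α) →₀ ℤ :=
  ((-1 : ℤ) ^ ∑ p ∈ (Finset.univ : Finset (Fin k × Fin k)).filter
      (fun p => p.1 < p.2 ∧ τ p.2 < τ p.1), deg (f (τ p.1)) * deg (f (τ p.2))) •
    Finsupp.single (fun i => f (τ i)) 1

/-- The action of a permutation on `k`-fold tensors, with Koszul signs. -/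
noncomputable def koszulPerm {α : Type*} (deg : α → ℕ) {k : ℕ} (τ : Equiv.Perm (Fin k)) :
    ((Fin k → α) →₀ ℤ) →ₗ[ℤ] ((Fin k → α) →₀ ℤ) :=
  Finsupp.lift _ ℤ (Fin k → α) (koszulPermFun deg τ)

/-- Tensor product of an `r`-tuple of elements of a free module, product-basis model. -/
noncomputable def tensorPi {r : ℕ} {α : Type*} [DecidableEq α] (c : Fin r → (α →₀ ℤ)) :
    (Fin r → α) →₀ ℤ :=
  ∑ g ∈ Fintype.piFinset (fun i => (c i).support), Finsupp.single g (∏ i, (c i) (g i))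

/-- `CS^{⊗ r} : C(□^n)^{⊗ r} → C(Δ^n)^{⊗ r}` (no Koszul signs: `CS` has degree 0). -/
noncomputable def csTensor (n r : ℕ) : ((Fin r → CubeB n) →₀ ℤ) →ₗ[ℤ] ((Fin r → SimpB n) →₀ ℤ) :=
  Finsupp.lift _ ℤ (Fin r → CubeB n) (fun f => tensorPi fun i => csFun n (f i))

/-- The index in `Fin (k_1 + ⋯ + k_r)` of the `j`-th tensor factor of the `i`-th block. -/
def blockIdx {r : ℕ} (K : Fin r → ℕ) {m : ℕ} (hm : m + 1 = ∑ i, K i) (i : Fin r)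
    (j : Fin (K i)) : Fin (m + 1) :=
  ⟨(∑ j' ∈ Finset.univ.filter (fun j' => j' < i), K j') + (j : ℕ), by
    have h2 : (j : ℕ) < K i := j.isLt
    have h3 : K i + ∑ j' ∈ Finset.univ.filter (fun j' => j' < i), K j' ≤ ∑ i', K i' := by
      rw [← Finset.sum_insert (a := i) (s := Finset.univ.filter (fun j' => j' < i)) (by simp)]
      exact Finset.sum_le_sum_of_subset (Finset.subset_univ _)
    omega⟩

/-- A `(k_1, …, k_r)`-shuffle: a permutation increasing on each block. -/
def IsShuffle {r : ℕ} (K : Fin r → ℕ) {m : ℕ} (hm : m + 1 = ∑ i, K i)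
    (σ : Equiv.Perm (Fin (m + 1))) : Prop :=
  ∀ (i : Fin r) (j j' : Fin (K i)), j < j' → σ (blockIdx K hm i j) < σ (blockIdx K hm i j')

/-- Total degree of the `i`-th block of a `k`-fold cubical tensor. -/
def cubeBlockDeg {n r : ℕ} (K : Fin r → ℕ) {m : ℕ} (hm : m + 1 = ∑ i, K i)
    (f : Fin (m + 1) → CubeB n) (i : Fin r) : ℕ :=
  ∑ j : Fin (K i), cubeDeg (f (blockIdx K hm i j))

/-- Total degree of the `i`-th block of a `k`-fold simplicial tensor. -/
def simpBlockDeg {n r : ℕ} (K : Fin r → ℕ) {m : ℕ} (hm : m + 1 = ∑ i, K i)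
    (f : Fin (m + 1) → SimpB n) (i : Fin r) : ℕ :=
  ∑ j : Fin (K i), simpDeg (f (blockIdx K hm i j))

/-- `∗^{k_1 - 1} ⊗ ⋯ ⊗ ∗^{k_r - 1}` on a cubical `k`-fold tensor basis element, with
the Koszul sign for applying the degree-`(k_i - 1)` maps across the earlier blocks. -/
noncomputable def cubeBlockJoinFun (n r : ℕ) (K : Fin r → ℕ) {m : ℕ} (hm : m + 1 = ∑ i, K i)
    (f : Fin (m + 1) → CubeB n) : (Fin r → CubeB n) →₀ ℤ :=
  ((-1 : ℤ) ^ ∑ p ∈ (Finset.univ : Finset (Fin r × Fin r)).filter (fun p => p.1 < p.2),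
      (K p.2 - 1) * cubeBlockDeg K hm f p.1) •
    tensorPi (fun i : Fin r =>
      foldJoin (cubeJoinC n) 0
        (List.ofFn fun j : Fin (K i) => (Finsupp.single (f (blockIdx K hm i j)) 1 : CubeChain n)))

/-- `∗^{k_1 - 1} ⊗ ⋯ ⊗ ∗^{k_r - 1} : C(□^n)^{⊗ k} → C(□^n)^{⊗ r}`. -/
noncomputable def cubeBlockJoin (n r : ℕ) (K : Fin r → ℕ) {m : ℕ} (hm : m + 1 = ∑ i, K i) :
    ((Fin (m + 1) → CubeB n) →₀ ℤ) →ₗ[ℤ] ((Fin r → CubeB n) →₀ ℤ) :=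
  Finsupp.lift _ ℤ (Fin (m + 1) → CubeB n) (cubeBlockJoinFun n r K hm)

/-- `∗^{k_1 - 1} ⊗ ⋯ ⊗ ∗^{k_r - 1}` on a simplicial `k`-fold tensor basis element. -/
noncomputable def simpBlockJoinFun (n r : ℕ) (K : Fin r → ℕ) {m : ℕ} (hm : m + 1 = ∑ i, K i)
    (f : Fin (m + 1) → SimpB n) : (Fin r → SimpB n) →₀ ℤ :=
  ((-1 : ℤ) ^ ∑ p ∈ (Finset.univ : Finset (Fin r × Fin r)).filter (fun p => p.1 < p.2),
      (K p.2 - 1) * simpBlockDeg K hm f p.1) •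
    tensorPi (fun i : Fin r =>
      foldJoin (simpJoinC n) 0
        (List.ofFn fun j : Fin (K i) => (Finsupp.single (f (blockIdx K hm i j)) 1 : SimpChain n)))

/-- `∗^{k_1 - 1} ⊗ ⋯ ⊗ ∗^{k_r - 1} : C(Δ^n)^{⊗ k} → C(Δ^n)^{⊗ r}`. -/
noncomputable def simpBlockJoin (n r : ℕ) (K : Fin r → ℕ) {m : ℕ} (hm : m + 1 = ∑ i, K i) :
    ((Fin (m + 1) → SimpB n) →₀ ℤ) →ₗ[ℤ] ((Fin r → SimpB n) →₀ ℤ) :=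
  Finsupp.lift _ ℤ (Fin (m + 1) → SimpB n) (simpBlockJoinFun n r K hm)

/-- A chain is homogeneous of degree `m` if its support is contained in degree-`m` basis elements. -/
def cubeHomog (n m : ℕ) (c : CubeChain n) : Prop := ∀ x ∈ c.support, cubeDeg x = m

/-- A simplicial chain is homogeneous of degree `m` if every basis element in its
support is a strictly increasing tuple `[v_0, …, v_m]`, i.e. has `m+1` vertices. -/
def simpHomog (n m : ℕ) (c : SimpChain n) : Prop := ∀ s ∈ c.support, s.card = m + 1

end CartanSerre

/-!
Both complexes are augmented and contractible. `C(Δ^n)` is the cone on the vertex `0`, and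
`C(□^n)` contracts onto the vertex `[0] ⊗ ⋯ ⊗ [0]` through the tensor powers of the contraction
`h [1] = [0,1]` of the interval. So in positive degrees every cycle of either complex is a
boundary, and in degree `0` a cycle is a boundary exactly when its augmentation vanishes. Since
`CS` is a chain map that respects the augmentations and sends the base vertex of the cube to the
base vertex of the simplex, it induces an isomorphism on homology in every degree.
-/

namespace Finsupp

variable {α β M : Type*}

theorem lift_single_eq_smul [AddCommMonoid M] [Module ℤ M] (f : α → M) (a : α) (r : ℤ) :
    Finsupp.lift M ℤ α f (single a r) = r • f a := by
  simp [Finsupp.lift_apply]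

theorem forall_mem_support_lift (f : α → β →₀ ℤ) {c : α →₀ ℤ} {P : β → Prop}
    (h : ∀ a ∈ c.support, ∀ b ∈ (f a).support, P b) :
    ∀ b ∈ (Finsupp.lift (β →₀ ℤ) ℤ α f c).support, P b := by
  classical
  intro b hb
  rw [Finsupp.lift_apply] at hb
  obtain ⟨a, ha, hb⟩ := Finset.mem_biUnion.mp (Finsupp.support_sum hb)
  exact h a ha b (Finsupp.support_smul hb)

theorem linearMap_apply_eq_of_forall_mem_support [AddCommMonoid M] [Module ℤ M]
    (F G : (α →₀ ℤ) →ₗ[ℤ] M) {c : α →₀ ℤ}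
    (h : ∀ a ∈ c.support, F (single a 1) = G (single a 1)) : F c = G c := by
  rw [← c.sum_single, map_finsuppSum, map_finsuppSum]
  refine Finset.sum_congr rfl fun a ha => ?_
  change F (single a (c a)) = G (single a (c a))
  rw [← smul_single_one, map_smul, map_smul, h a ha]

end Finsupp

namespace CartanSerre

open Finsupp Function

variable {n : ℕ}

def mids (x : CubeB n) : Finset (Fin n) := Finset.univ.filter fun i => x i = CubeF.mid

@[simp] theorem mem_mids {x : CubeB n} {i : Fin n} : i ∈ mids x ↔ x i = CubeF.mid := by
  simp [mids]

theorem cubeDeg_eq_card_mids (x : CubeB n) : cubeDeg x = (mids x).card := rfl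

theorem mids_update_of_ne_mid (x : CubeB n) (i : Fin n) {c : CubeF} (hc : c ≠ CubeF.mid) :
    mids (update x i c) = (mids x).erase i := by
  ext j
  by_cases h : j = i
  · subst h; simp [hc]
  · simp [h]

theorem ne_zero_of_lt_pIdx {x : CubeB n} {j : Fin n} (h : (j : ℕ) < pIdx x) :
    x j ≠ CubeF.zero := by
  have := List.not_of_lt_findIdx (p := fun c => decide (c = CubeF.zero)) (xs := List.ofFn x) h
  simpa using this

theorem pIdx_spec {x : CubeB n} (h : (pIdx x : ℕ) < n) : x ⟨pIdx x, h⟩ = CubeF.zero := by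
  have := List.findIdx_getElem (p := fun c => decide (c = CubeF.zero)) (xs := List.ofFn x)
    (w := by simpa [pIdx] using h)
  simpa [pIdx] using this

theorem pIdx_le_of_eq_zero {x : CubeB n} {j : Fin n} (h : x j = CubeF.zero) :
    pIdx x ≤ j.castSucc := by
  by_contra hlt
  exact ne_zero_of_lt_pIdx (not_le.mp hlt) h

theorem pIdx_eq_of {x : CubeB n} {k : Fin (n + 1)}
    (hlt : ∀ j : Fin n, (j : ℕ) < k → x j ≠ CubeF.zero)
    (hk : ∀ h : (k : ℕ) < n, x ⟨k, h⟩ = CubeF.zero) : pIdx x = k := by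
  refine le_antisymm ?_ ?_
  · by_cases h : (k : ℕ) < n
    · exact pIdx_le_of_eq_zero (hk h)
    · exact Fin.le_iff_val_le_val.mpr (by omega)
  · by_contra hgt
    have hn : (pIdx x : ℕ) < n := by omega
    exact hlt _ (not_le.mp hgt) (pIdx_spec hn)

theorem pIdx_update_of_ne_zero {x : CubeB n} {i : Fin n} {c : CubeF}
    (hi : x i ≠ CubeF.zero) (hc : c ≠ CubeF.zero) : pIdx (update x i c) = pIdx x := by
  refine pIdx_eq_of (fun j hj => ?_) (fun h => ?_)
  · by_cases hji : j = i
    · subst hji; simpa using hc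
    · simpa [update_of_ne hji] using ne_zero_of_lt_pIdx hj
  · have hne : (⟨pIdx x, h⟩ : Fin n) ≠ i := fun he => hi (he ▸ pIdx_spec h)
    rw [update_of_ne hne, pIdx_spec h]

theorem pIdx_update_of_pIdx_lt {x : CubeB n} {i : Fin n} (hi : pIdx x < i.castSucc)
    (c : CubeF) : pIdx (update x i c) = pIdx x := by
  have hi' : (pIdx x : ℕ) < i := hi
  refine pIdx_eq_of (fun j hj => ?_) (fun h => ?_)
  · rw [update_of_ne (by rintro rfl; omega)]
    exact ne_zero_of_lt_pIdx hj
  · rw [update_of_ne (Fin.ne_of_val_ne hi'.ne), pIdx_spec h]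

theorem pIdx_update_zero {x : CubeB n} {i : Fin n} (hlt : ∀ j < i, x j ≠ CubeF.zero) :
    pIdx (update x i CubeF.zero) = i.castSucc := by
  refine pIdx_eq_of (fun j hj => ?_) (fun h => ?_)
  · have hj : j < i := hj
    rw [update_of_ne hj.ne]
    exact hlt j hj
  · simp

def ZeroBeforeMid (x : CubeB n) : Prop :=
  ∃ i j : Fin n, i < j ∧ x i = CubeF.zero ∧ x j = CubeF.mid

theorem csFun_of_zeroBeforeMid {x : CubeB n} (h : ZeroBeforeMid x) : csFun n x = 0 :=
  if_pos h

theorem csFun_of_not_zeroBeforeMid {x : CubeB n} (h : ¬ ZeroBeforeMid x) :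
    csFun n x = single (csSet x) 1 :=
  if_neg h

theorem csL_single (x : CubeB n) (r : ℤ) : csL n (single x r) = r • csFun n x :=
  lift_single_eq_smul _ _ _

theorem cubeBd_single (x : CubeB n) : cubeBd n (single x 1) = cubeBdFun n x := by
  rw [cubeBd, lift_single_eq_smul, one_smul]

theorem simpBd_single (s : SimpB n) : simpBd n (single s 1) = simpBdFun n s := by
  rw [simpBd, lift_single_eq_smul, one_smul]

theorem cubeEps_single (x : CubeB n) (r : ℤ) :
    cubeEps n (single x r) = if cubeDeg x = 0 then r else 0 := by
  rw [cubeEps, lift_single_eq_smul, smul_eq_mul]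
  split_ifs <;> simp

theorem simpEps_single (s : SimpB n) (r : ℤ) :
    simpEps n (single s r) = if s.card = 1 then r else 0 := by
  rw [simpEps, lift_single_eq_smul, smul_eq_mul]
  split_ifs <;> simp

theorem castSucc_lt_pIdx {x : CubeB n} (hx : ¬ ZeroBeforeMid x) {q : Fin n}
    (hq : x q = CubeF.mid) : q.castSucc < pIdx x := by
  by_contra hle
  have hn : (pIdx x : ℕ) < n := by
    have : (pIdx x : ℕ) ≤ q := not_lt.mp hle
    omega
  refine hx ⟨⟨pIdx x, hn⟩, q, lt_of_le_of_ne (not_lt.mp hle) fun he => ?_, pIdx_spec hn, hq⟩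
  rw [← he, pIdx_spec hn] at hq
  exact CubeF.noConfusion hq

theorem pIdx_notMem_image_mids {x : CubeB n} (hx : ¬ ZeroBeforeMid x) :
    pIdx x ∉ (mids x).image Fin.castSucc := by
  simp only [Finset.mem_image, mem_mids, not_exists, not_and]
  intro q hq he
  exact (castSucc_lt_pIdx hx hq).ne he

theorem csSet_eq (x : CubeB n) : csSet x = insert (pIdx x) ((mids x).image Fin.castSucc) := rfl

theorem card_csSet {x : CubeB n} (hx : ¬ ZeroBeforeMid x) : (csSet x).card = cubeDeg x + 1 := by
  rw [csSet_eq, Finset.card_insert_of_notMem (pIdx_notMem_image_mids hx),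
    Finset.card_image_of_injective _ (Fin.castSucc_injective n)]
  rfl

theorem csL_homog {m : ℕ} {c : CubeChain n} (hc : cubeHomog n m c) :
    simpHomog n m (csL n c) := by
  refine Finsupp.forall_mem_support_lift _ fun x hx s hs => ?_
  by_cases h : ZeroBeforeMid x
  · simp [csFun_of_zeroBeforeMid h] at hs
  · rw [csFun_of_not_zeroBeforeMid h] at hs
    rw [Finset.mem_singleton.mp (support_single_subset hs), card_csSet h, hc x hx]

noncomputable def faceDiff (x : CubeB n) (q : Fin n) : CubeChain n :=
  single (update x q CubeF.one) 1 - single (update x q CubeF.zero) 1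

theorem cubeBdFun_eq (x : CubeB n) :
    cubeBdFun n x = ∑ q ∈ mids x, (-1 : ℤ) ^ ((mids x).filter (· < q)).card • faceDiff x q := by
  refine Finset.sum_congr rfl fun q _ => ?_
  congr 3
  ext j
  simp [and_comm]

theorem zeroBeforeMid_update_iff {x : CubeB n} {q : Fin n} {c : CubeF} (hq : x q = CubeF.mid)
    (hc : c ≠ CubeF.mid) (hlast : c = CubeF.zero → ∀ j, x j = CubeF.mid → j ≤ q) :
    ZeroBeforeMid (update x q c) ↔
      ∃ i j : Fin n, i < j ∧ x i = CubeF.zero ∧ x j = CubeF.mid ∧ j ≠ q := by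
  constructor
  · rintro ⟨i, j, hij, hi, hj⟩
    have hjq : j ≠ q := by rintro rfl; simp [hc] at hj
    rw [update_of_ne hjq] at hj
    by_cases hiq : i = q
    · subst hiq
      exact absurd (hlast (by simpa using hi) j hj) (not_le.mpr hij)
    · exact ⟨i, j, hij, by rwa [update_of_ne hiq] at hi, hj, hjq⟩
  · rintro ⟨i, j, hij, hi, hj, hjq⟩
    have hiq : i ≠ q := by rintro rfl; rw [hq] at hi; exact CubeF.noConfusion hi
    exact ⟨i, j, hij, by rwa [update_of_ne hiq], by rwa [update_of_ne hjq]⟩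

theorem csFun_update_one {x : CubeB n} (hx : ¬ ZeroBeforeMid x) {q : Fin n}
    (hq : x q = CubeF.mid) :
    csFun n (update x q CubeF.one) = single ((csSet x).erase q.castSucc) 1 := by
  have hx' : ¬ ZeroBeforeMid (update x q CubeF.one) := by
    rw [zeroBeforeMid_update_iff hq (by decide) fun h => CubeF.noConfusion h]
    rintro ⟨i, j, hij, hi, hj, -⟩
    exact hx ⟨i, j, hij, hi, hj⟩
  rw [csFun_of_not_zeroBeforeMid hx', csSet_eq, csSet_eq,
    mids_update_of_ne_mid _ _ (by decide),
    pIdx_update_of_ne_zero (by rw [hq]; decide) (by decide),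
    Finset.image_erase (Fin.castSucc_injective n),
    Finset.erase_insert_of_ne (castSucc_lt_pIdx hx hq).ne']

theorem csFun_update_zero_of_lt {x : CubeB n} {q r : Fin n} (hr : x r = CubeF.mid)
    (hqr : q < r) : csFun n (update x q CubeF.zero) = 0 :=
  csFun_of_zeroBeforeMid ⟨q, r, hqr, update_self .., by rwa [update_of_ne hqr.ne']⟩

theorem csFun_update_zero_of_last {x : CubeB n} (hx : ¬ ZeroBeforeMid x) {q : Fin n}
    (hq : x q = CubeF.mid) (hlast : ∀ j, x j = CubeF.mid → j ≤ q) :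
    csFun n (update x q CubeF.zero) = single ((mids x).image Fin.castSucc) 1 := by
  have hx' : ¬ ZeroBeforeMid (update x q CubeF.zero) := by
    rw [zeroBeforeMid_update_iff hq (by decide) fun _ => hlast]
    rintro ⟨i, j, hij, hi, hj, -⟩
    exact hx ⟨i, j, hij, hi, hj⟩
  rw [csFun_of_not_zeroBeforeMid hx', csSet_eq, mids_update_of_ne_mid _ _ (by decide),
    pIdx_update_zero fun j hj hz => hx ⟨j, q, hj, hz, hq⟩,
    Finset.image_erase (Fin.castSucc_injective n),
    Finset.insert_erase (Finset.mem_image_of_mem _ (mem_mids.mpr hq))]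

theorem csFun_update_one_eq_update_zero {x : CubeB n} (hx : ZeroBeforeMid x) {q : Fin n}
    (hq : x q = CubeF.mid) :
    csFun n (update x q CubeF.one) = csFun n (update x q CubeF.zero) := by
  obtain ⟨a, b, hab, ha, hb⟩ := hx
  have haq : a ≠ q := by rintro rfl; rw [hq] at ha; exact CubeF.noConfusion ha
  by_cases hlast : ∀ j, x j = CubeF.mid → j ≤ q
  · have hiff :=
      (zeroBeforeMid_update_iff hq (c := CubeF.one) (by decide) fun h => CubeF.noConfusion h).trans
        (zeroBeforeMid_update_iff hq (c := CubeF.zero) (by decide) fun _ => hlast).symm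
    by_cases h1 : ZeroBeforeMid (update x q CubeF.one)
    · rw [csFun_of_zeroBeforeMid h1, csFun_of_zeroBeforeMid (hiff.mp h1)]
    · have hp : pIdx x < q.castSucc := (pIdx_le_of_eq_zero ha).trans_lt
        (Fin.castSucc_lt_castSucc_iff.mpr (hab.trans_le (hlast b hb)))
      rw [csFun_of_not_zeroBeforeMid h1, csFun_of_not_zeroBeforeMid (hiff.not.mp h1), csSet_eq,
        csSet_eq, pIdx_update_of_pIdx_lt hp, pIdx_update_of_pIdx_lt hp,
        mids_update_of_ne_mid _ _ (by decide), mids_update_of_ne_mid _ _ (by decide)]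
  · push Not at hlast
    obtain ⟨j, hj, hqj⟩ := hlast
    have hdeg : ∀ c : CubeF, ZeroBeforeMid (update x q c) := fun c => by
      by_cases hbq : b = q
      · exact ⟨a, j, hab.trans (hbq ▸ hqj), by rwa [update_of_ne haq],
          by rwa [update_of_ne hqj.ne']⟩
      · exact ⟨a, b, hab, by rwa [update_of_ne haq], by rwa [update_of_ne hbq]⟩
    rw [csFun_of_zeroBeforeMid (hdeg _), csFun_of_zeroBeforeMid (hdeg _)]

theorem filter_csSet_lt_pIdx {x : CubeB n} (hx : ¬ ZeroBeforeMid x) :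
    (csSet x).filter (· < pIdx x) = (mids x).image Fin.castSucc := by
  ext v
  simp only [csSet_eq, Finset.mem_filter, Finset.mem_insert, Finset.mem_image, mem_mids]
  constructor
  · rintro ⟨rfl | hv, hlt⟩
    · exact absurd hlt (lt_irrefl _)
    · exact hv
  · rintro ⟨q, hq, rfl⟩
    exact ⟨Or.inr ⟨q, hq, rfl⟩, castSucc_lt_pIdx hx hq⟩

theorem filter_csSet_lt_castSucc {x : CubeB n} (hx : ¬ ZeroBeforeMid x) {q : Fin n}
    (hq : x q = CubeF.mid) :
    (csSet x).filter (· < q.castSucc) = ((mids x).filter (· < q)).image Fin.castSucc := by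
  ext v
  simp only [csSet_eq, Finset.mem_filter, Finset.mem_insert, Finset.mem_image, mem_mids]
  constructor
  · rintro ⟨rfl | ⟨r, hr, rfl⟩, hlt⟩
    · exact absurd (hlt.trans (castSucc_lt_pIdx hx hq)) (lt_irrefl _)
    · exact ⟨r, ⟨hr, Fin.castSucc_lt_castSucc_iff.mp hlt⟩, rfl⟩
  · rintro ⟨r, ⟨hr, hrq⟩, rfl⟩
    exact ⟨Or.inr ⟨r, hr, rfl⟩, Fin.castSucc_lt_castSucc_iff.mpr hrq⟩

theorem simpBdFun_csSet {x : CubeB n} (hx : ¬ ZeroBeforeMid x) (hM : (mids x).Nonempty) :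
    simpBdFun n (csSet x) =
      (-1 : ℤ) ^ (mids x).card • single ((mids x).image Fin.castSucc) 1 +
        ∑ q ∈ mids x, (-1 : ℤ) ^ ((mids x).filter (· < q)).card •
          single ((csSet x).erase q.castSucc) 1 := by
  have h2 : 2 ≤ (csSet x).card := by
    rw [card_csSet hx, cubeDeg_eq_card_mids]
    have := hM.card_pos
    omega
  have hsplit : ∀ F : Fin (n + 1) → SimpChain n,
      ∑ v ∈ csSet x, F v = F (pIdx x) + ∑ q ∈ mids x, F q.castSucc := fun F => by
    rw [csSet_eq, Finset.sum_insert (pIdx_notMem_image_mids hx),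
      Finset.sum_image fun _ _ _ _ h => Fin.castSucc_injective n h]
  rw [simpBdFun, if_pos h2, hsplit, filter_csSet_lt_pIdx hx,
    Finset.card_image_of_injective _ (Fin.castSucc_injective n), csSet_eq,
    Finset.erase_insert (pIdx_notMem_image_mids hx), ← csSet_eq]
  congr 1
  refine Finset.sum_congr rfl fun q hq => ?_
  rw [filter_csSet_lt_castSucc hx (mem_mids.mp hq),
    Finset.card_image_of_injective _ (Fin.castSucc_injective n)]

theorem csL_faceDiff (x : CubeB n) (q : Fin n) :
    csL n (faceDiff x q) = csFun n (update x q CubeF.one) - csFun n (update x q CubeF.zero) := by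
  rw [faceDiff, map_sub, csL_single, csL_single, one_smul, one_smul]

theorem csL_cubeBdFun_of_not_zeroBeforeMid {x : CubeB n} (hx : ¬ ZeroBeforeMid x)
    (hM : (mids x).Nonempty) : csL n (cubeBdFun n x) = simpBdFun n (csSet x) := by
  set μ := (mids x).max' hM
  have hμ : x μ = CubeF.mid := mem_mids.mp ((mids x).max'_mem hM)
  have hlast : ∀ j, x j = CubeF.mid → j ≤ μ := fun j hj => (mids x).le_max' j (mem_mids.mpr hj)
  have hfaces : ∀ q ∈ mids x, csL n (faceDiff x q) = single ((csSet x).erase q.castSucc) 1 -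
      if q = μ then single ((mids x).image Fin.castSucc) 1 else 0 := by
    intro q hq
    rw [csL_faceDiff, csFun_update_one hx (mem_mids.mp hq)]
    split_ifs with hqμ
    · rw [hqμ, csFun_update_zero_of_last hx hμ hlast]
    · rw [csFun_update_zero_of_lt hμ (lt_of_le_of_ne (hlast q (mem_mids.mp hq)) hqμ)]
  have hsign : (-1 : ℤ) ^ (mids x).card = -(-1 : ℤ) ^ ((mids x).filter (· < μ)).card := by
    have hbelow : (mids x).filter (· < μ) = (mids x).erase μ := by
      ext r
      simp only [Finset.mem_filter, Finset.mem_erase, mem_mids]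
      exact ⟨fun h => ⟨h.2.ne, h.1⟩, fun h => ⟨h.2, lt_of_le_of_ne (hlast r h.2) h.1⟩⟩
    rw [hbelow, Finset.card_erase_of_mem ((mids x).max'_mem hM),
      ← Nat.sub_add_cancel hM.card_pos, pow_succ]
    simp
  rw [cubeBdFun_eq, map_sum, Finset.sum_congr rfl fun q hq => by rw [map_smul, hfaces q hq]]
  simp only [smul_sub, smul_ite, smul_zero, Finset.sum_sub_distrib, Finset.sum_ite_eq']
  rw [if_pos ((mids x).max'_mem hM), simpBdFun_csSet hx hM, hsign, neg_smul, sub_eq_add_neg,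
    add_comm]

theorem simpBd_csFun (x : CubeB n) : simpBd n (csFun n x) = csL n (cubeBdFun n x) := by
  by_cases hx : ZeroBeforeMid x
  · rw [csFun_of_zeroBeforeMid hx, map_zero, cubeBdFun_eq, map_sum]
    refine (Finset.sum_eq_zero fun q hq => ?_).symm
    rw [map_smul, csL_faceDiff, csFun_update_one_eq_update_zero hx (mem_mids.mp hq), sub_self,
      smul_zero]
  rw [csFun_of_not_zeroBeforeMid hx, simpBd_single]
  rcases (mids x).eq_empty_or_nonempty with hM | hM
  · rw [cubeBdFun_eq, hM, Finset.sum_empty, map_zero, simpBdFun, if_neg]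
    rw [card_csSet hx, cubeDeg_eq_card_mids, hM]
    simp
  · exact (csL_cubeBdFun_of_not_zeroBeforeMid hx hM).symm

theorem simpBd_csL (c : CubeChain n) : simpBd n (csL n c) = csL n (cubeBd n c) := by
  have h : (simpBd n).comp (csL n) = (csL n).comp (cubeBd n) := by
    refine Finsupp.lhom_ext fun x r => ?_
    simp only [LinearMap.comp_apply]
    rw [csL_single, ← smul_single_one, map_smul, map_smul, cubeBd_single, simpBd_csFun, map_smul]
  exact LinearMap.congr_fun h c

def cubeOrigin (n : ℕ) : CubeB n := fun _ => CubeF.zero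

theorem mids_cubeOrigin : mids (cubeOrigin n) = ∅ := by
  ext
  simp [cubeOrigin]

theorem cubeBd_single_cubeOrigin : cubeBd n (single (cubeOrigin n) 1) = 0 := by
  rw [cubeBd_single, cubeBdFun_eq, mids_cubeOrigin, Finset.sum_empty]

theorem csL_single_cubeOrigin : csL n (single (cubeOrigin n) 1) = single {0} 1 := by
  have h : ¬ ZeroBeforeMid (cubeOrigin n) := fun ⟨_, _, _, _, h⟩ => CubeF.noConfusion h
  have hp : pIdx (cubeOrigin n) = 0 :=
    pIdx_eq_of (fun _ h => absurd h (Nat.not_lt_zero _)) fun _ => rfl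
  rw [csL_single, one_smul, csFun_of_not_zeroBeforeMid h, csSet_eq, mids_cubeOrigin,
    Finset.image_empty, hp, Finset.insert_empty]

theorem simpEps_comp_csL : (simpEps n).comp (csL n) = cubeEps n := by
  refine Finsupp.lhom_ext fun x r => ?_
  rw [LinearMap.comp_apply, csL_single, map_smul, cubeEps_single]
  by_cases hx : ZeroBeforeMid x
  · obtain ⟨-, j, -, -, hj⟩ := id hx
    have hdeg : cubeDeg x ≠ 0 := Finset.card_ne_zero.mpr ⟨j, mem_mids.mpr hj⟩
    rw [csFun_of_zeroBeforeMid hx, map_zero, smul_zero, if_neg hdeg]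
  · rw [csFun_of_not_zeroBeforeMid hx, simpEps_single, card_csSet hx]
    simp

theorem simpEps_simpBdFun (s : SimpB n) : simpEps n (simpBdFun n s) = 0 := by
  rw [simpBdFun]
  split_ifs with h2
  swap
  · exact map_zero _
  rw [map_sum]
  simp_rw [map_smul, simpEps_single]
  rcases h2.eq_or_lt with h | h
  · obtain ⟨a, b, hab, rfl⟩ := Finset.card_eq_two.mp h.symm
    clear h h2
    wlog hlt : a < b generalizing a b
    · rw [Finset.pair_comm]
      exact this b a hab.symm (lt_of_le_of_ne (not_lt.mp hlt) hab.symm)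
    simp [Finset.sum_pair hab, Finset.filter_insert, Finset.filter_singleton, hlt, hlt.not_gt,
      hab, hab.symm]
  · refine Finset.sum_eq_zero fun v hv => ?_
    rw [Finset.card_erase_of_mem hv, if_neg (by omega), smul_zero]

theorem simpEps_comp_simpBd : (simpEps n).comp (simpBd n) = 0 := by
  refine Finsupp.lhom_ext fun s r => ?_
  rw [LinearMap.comp_apply, ← smul_single_one, map_smul, map_smul, simpBd_single,
    simpEps_simpBdFun, smul_zero, LinearMap.zero_apply]

noncomputable def simpConeFun (n : ℕ) (s : SimpB n) : SimpChain n :=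
  if (0 : Fin (n + 1)) ∈ s then 0 else single (insert 0 s) 1

noncomputable def simpCone (n : ℕ) : SimpChain n →ₗ[ℤ] SimpChain n :=
  Finsupp.lift (SimpChain n) ℤ (SimpB n) (simpConeFun n)

theorem simpCone_single (s : SimpB n) : simpCone n (single s 1) = simpConeFun n s := by
  rw [simpCone, lift_single_eq_smul, one_smul]

theorem card_filter_lt_zero (s : SimpB n) : (s.filter (· < 0)).card = 0 := by
  simp

theorem simpCone_simpBdFun_of_zero_mem {s : SimpB n} (h0 : (0 : Fin (n + 1)) ∈ s)
    (h2 : 2 ≤ s.card) : simpCone n (simpBdFun n s) = single s 1 := by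
  rw [simpBdFun, if_pos h2, map_sum, Finset.sum_eq_single_of_mem 0 h0]
  · rw [map_smul, simpCone_single, simpConeFun, if_neg (Finset.notMem_erase _ _),
      Finset.insert_erase h0, card_filter_lt_zero, pow_zero, one_smul]
  · intro v _ hv
    rw [map_smul, simpCone_single, simpConeFun, if_pos (Finset.mem_erase.mpr ⟨Ne.symm hv, h0⟩),
      smul_zero]

theorem simpCone_simpBdFun_of_zero_notMem {s : SimpB n} (h0 : (0 : Fin (n + 1)) ∉ s) :
    simpCone n (simpBdFun n s) = if 2 ≤ s.card then
      ∑ v ∈ s, (-1 : ℤ) ^ (s.filter (· < v)).card • single (insert 0 (s.erase v)) 1 else 0 := by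
  rw [simpBdFun]
  split_ifs
  · rw [map_sum]
    refine Finset.sum_congr rfl fun v _ => ?_
    rw [map_smul, simpCone_single, simpConeFun,
      if_neg fun h => h0 (Finset.mem_of_mem_erase h)]
  · exact map_zero _

theorem simpBdFun_insert_zero {s : SimpB n} (h0 : (0 : Fin (n + 1)) ∉ s) (hs : s.Nonempty) :
    simpBdFun n (insert 0 s) = single s 1 -
      ∑ v ∈ s, (-1 : ℤ) ^ (s.filter (· < v)).card • single (insert 0 (s.erase v)) 1 := by
  have h2 : 2 ≤ (insert 0 s).card := by
    rw [Finset.card_insert_of_notMem h0]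
    have := hs.card_pos
    omega
  rw [simpBdFun, if_pos h2, Finset.sum_insert h0, card_filter_lt_zero, pow_zero, one_smul,
    Finset.erase_insert h0, sub_eq_add_neg, ← Finset.sum_neg_distrib]
  congr 1
  refine Finset.sum_congr rfl fun v hv => ?_
  have hv0 : (0 : Fin (n + 1)) < v := Fin.pos_of_ne_zero fun h => h0 (h ▸ hv)
  rw [Finset.filter_insert, if_pos hv0,
    Finset.card_insert_of_notMem fun h => h0 (Finset.mem_filter.mp h).1,
    Finset.erase_insert_of_ne hv0.ne, pow_succ, mul_neg_one, neg_smul]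

-- `SimpB n` also contains the junk element `∅`, a cycle that bounds nothing.
theorem simpBd_simpConeFun_add (s : SimpB n) (hs : s.Nonempty) :
    simpBd n (simpConeFun n s) + simpCone n (simpBdFun n s) =
      single s 1 - simpEps n (single s 1) • single {0} 1 := by
  rw [simpEps_single, simpConeFun]
  by_cases h0 : (0 : Fin (n + 1)) ∈ s
  · rw [if_pos h0, map_zero, zero_add]
    by_cases h1 : s.card = 1
    · obtain ⟨a, rfl⟩ := Finset.card_eq_one.mp h1
      obtain rfl := Finset.mem_singleton.mp h0
      simp [simpBdFun]
    · rw [simpCone_simpBdFun_of_zero_mem h0 (by have := hs.card_pos; omega), if_neg h1,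
        zero_smul, sub_zero]
  · rw [if_neg h0, simpBd_single, simpBdFun_insert_zero h0 hs,
      simpCone_simpBdFun_of_zero_notMem h0]
    by_cases h1 : s.card = 1
    · obtain ⟨a, rfl⟩ := Finset.card_eq_one.mp h1
      simp [Finset.filter_singleton]
    · rw [if_pos (by have := hs.card_pos; omega), if_neg h1, zero_smul, sub_zero, sub_add_cancel]

theorem simpBd_simpCone_add {m : ℕ} {z : SimpChain n} (hz : simpHomog n m z) :
    simpBd n (simpCone n z) + simpCone n (simpBd n z) = z - simpEps n z • single {0} 1 := by
  refine Finsupp.linearMap_apply_eq_of_forall_mem_support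
    ((simpBd n).comp (simpCone n) + (simpCone n).comp (simpBd n))
    (LinearMap.id - (simpEps n).smulRight (single {0} 1)) fun s hs => ?_
  have hs : s.Nonempty := Finset.card_pos.mp (by rw [hz s hs]; omega)
  simpa [simpCone_single, simpBd_single] using simpBd_simpConeFun_add s hs

theorem simpCone_homog {m : ℕ} {z : SimpChain n} (hz : simpHomog n m z) :
    simpHomog n (m + 1) (simpCone n z) := by
  refine Finsupp.forall_mem_support_lift _ fun s hs t ht => ?_
  rw [simpConeFun] at ht
  split_ifs at ht with h0
  · simp at ht
  · rw [Finset.mem_singleton.mp (support_single_subset ht), Finset.card_insert_of_notMem h0,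
      hz s hs]

def zeroPrefix (x : CubeB n) (k : ℕ) : CubeB n :=
  fun j => if (j : ℕ) < k then CubeF.zero else x j

theorem zeroPrefix_zero (x : CubeB n) : zeroPrefix x 0 = x := by
  ext j
  simp [zeroPrefix]

def coneIdx (x : CubeB n) : Finset (Fin n) :=
  Finset.univ.filter fun i => x i = CubeF.one ∧ ∀ j < i, x j ≠ CubeF.mid

def coneCube (x : CubeB n) (i : Fin n) : CubeB n := update (zeroPrefix x i) i CubeF.mid

/-- The contraction `Σ_i (η ε)^{⊗ (i-1)} ⊗ h ⊗ id^{⊗ (n-i)}` of `C(□^n)`, with `h [1] = [0,1]` and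
`h [0] = h [0,1] = 0`. Since `η ε` kills `[0,1]`, the `i`-th summand survives exactly for
`i ∈ coneIdx x`, and it carries no Koszul sign because the factors before `i` have degree `0`. -/
noncomputable def cubeConeFun (n : ℕ) (x : CubeB n) : CubeChain n :=
  ∑ i ∈ coneIdx x, single (coneCube x i) 1

noncomputable def cubeCone (n : ℕ) : CubeChain n →ₗ[ℤ] CubeChain n :=
  Finsupp.lift (CubeChain n) ℤ (CubeB n) (cubeConeFun n)

theorem cubeCone_single (x : CubeB n) : cubeCone n (single x 1) = cubeConeFun n x := by
  rw [cubeCone, lift_single_eq_smul, one_smul]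

@[simp] theorem mem_coneIdx {x : CubeB n} {i : Fin n} :
    i ∈ coneIdx x ↔ x i = CubeF.one ∧ ∀ j < i, x j ≠ CubeF.mid := by
  simp [coneIdx]

theorem lt_of_mem_coneIdx {x : CubeB n} {i q : Fin n} (hi : i ∈ coneIdx x)
    (hq : x q = CubeF.mid) : i < q := by
  obtain ⟨hone, hbefore⟩ := mem_coneIdx.mp hi
  rcases lt_trichotomy i q with h | rfl | h
  · exact h
  · rw [hone] at hq; exact CubeF.noConfusion hq
  · exact absurd hq (hbefore q h)

theorem mids_coneCube {x : CubeB n} {i : Fin n} (hi : i ∈ coneIdx x) :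
    mids (coneCube x i) = insert i (mids x) := by
  ext j
  rw [mem_mids, Finset.mem_insert, mem_mids, coneCube]
  rcases lt_trichotomy j i with h | rfl | h
  · rw [update_of_ne h.ne, zeroPrefix, if_pos (show (j : ℕ) < i from h)]
    refine ⟨fun h => CubeF.noConfusion h, ?_⟩
    rintro (rfl | hj)
    · exact absurd h (lt_irrefl _)
    · exact absurd (lt_of_mem_coneIdx hi hj) (asymm h)
  · simp
  · rw [update_of_ne h.ne', zeroPrefix, if_neg (not_lt.mpr (show (i : ℕ) ≤ j from h.le))]
    simp [h.ne']

theorem cubeDeg_coneCube {x : CubeB n} {i : Fin n} (hi : i ∈ coneIdx x) :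
    cubeDeg (coneCube x i) = cubeDeg x + 1 := by
  rw [cubeDeg_eq_card_mids, cubeDeg_eq_card_mids, mids_coneCube hi,
    Finset.card_insert_of_notMem fun h => (lt_of_mem_coneIdx hi (mem_mids.mp h)).false]

theorem update_coneCube_one {x : CubeB n} {i : Fin n} (h : x i = CubeF.one) :
    update (coneCube x i) i CubeF.one = zeroPrefix x i := by
  ext j
  by_cases hj : j = i
  · subst hj; simp [zeroPrefix, h]
  · simp [coneCube, hj]

theorem update_coneCube_zero (x : CubeB n) (i : Fin n) :
    update (coneCube x i) i CubeF.zero = zeroPrefix x (i + 1) := by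
  ext j
  by_cases hj : j = i
  · subst hj; simp [zeroPrefix]
  · have : (j : ℕ) ≠ i := fun h => hj (Fin.ext h)
    simp only [coneCube, update_of_ne hj, zeroPrefix]
    split_ifs <;> first | rfl | omega

theorem cubeBdFun_coneCube {x : CubeB n} {i : Fin n} (hi : i ∈ coneIdx x) :
    cubeBdFun n (coneCube x i) =
      (single (zeroPrefix x i) 1 - single (zeroPrefix x (i + 1)) 1) -
        ∑ q ∈ mids x, (-1 : ℤ) ^ ((mids x).filter (· < q)).card • faceDiff (coneCube x i) q := by
  have hnot : i ∉ mids x := fun h => (lt_of_mem_coneIdx hi (mem_mids.mp h)).false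
  rw [cubeBdFun_eq, mids_coneCube hi, Finset.sum_insert hnot, faceDiff,
    update_coneCube_one (mem_coneIdx.mp hi).1, update_coneCube_zero,
    sub_eq_add_neg (single _ 1 - single _ 1), ← Finset.sum_neg_distrib]
  congr 1
  · rw [Finset.card_eq_zero.mpr, pow_zero, one_smul]
    exact Finset.filter_eq_empty_iff.mpr fun q hq hlt => by
      rcases Finset.mem_insert.mp hq with rfl | hq
      · exact lt_irrefl _ hlt
      · exact (lt_of_mem_coneIdx hi (mem_mids.mp hq)).not_gt hlt
  · refine Finset.sum_congr rfl fun q hq => ?_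
    have hiq := lt_of_mem_coneIdx hi (mem_mids.mp hq)
    rw [Finset.filter_insert, if_pos hiq,
      Finset.card_insert_of_notMem fun h => hnot (Finset.mem_filter.mp h).1, pow_succ,
      mul_neg_one, neg_smul]

theorem zeroPrefix_succ_of_eq_zero {x : CubeB n} {i : Fin n} (h : x i = CubeF.zero) :
    zeroPrefix x (i + 1) = zeroPrefix x i := by
  ext j
  simp only [zeroPrefix]
  by_cases hji : j = i
  · subst hji; simp [h]
  · have : (j : ℕ) ≠ i := fun e => hji (Fin.ext e)
    split_ifs <;> first | rfl | omega

theorem sum_coneIdx_telescope {x : CubeB n} {K : ℕ} (hK : K ≤ n)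
    (hmid : ∀ j : Fin n, (j : ℕ) < K → x j ≠ CubeF.mid) (hidx : ∀ i ∈ coneIdx x, (i : ℕ) < K) :
    ∑ i ∈ coneIdx x, (single (zeroPrefix x i) (1 : ℤ) - single (zeroPrefix x (i + 1)) 1) =
      single x 1 - single (zeroPrefix x K) 1 := by
  have hsub : coneIdx x ⊆ Finset.univ.filter fun i : Fin n => (i : ℕ) < K :=
    fun i hi => Finset.mem_filter.mpr ⟨Finset.mem_univ _, hidx i hi⟩
  rw [Finset.sum_subset hsub fun i hiK hi => ?_]
  · rw [Finset.sum_filter, Fin.sum_univ_eq_sum_range (fun a => if a < K then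
      single (zeroPrefix x a) (1 : ℤ) - single (zeroPrefix x (a + 1)) 1 else 0) n,
      ← Finset.sum_filter, show (Finset.range n).filter (· < K) = Finset.range K by
        ext; simp only [Finset.mem_filter, Finset.mem_range]; omega,
      Finset.sum_range_sub' (fun a => single (zeroPrefix x a) (1 : ℤ)), zeroPrefix_zero]
  · have hiK : (i : ℕ) < K := (Finset.mem_filter.mp hiK).2
    have hzero : x i = CubeF.zero := by
      cases h : x i with
      | zero => rfl
      | mid => exact absurd h (hmid i hiK)
      | one => exact absurd (mem_coneIdx.mpr ⟨h, fun j hj => hmid j ((Fin.lt_def.mp hj).trans hiK)⟩) hi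
    rw [zeroPrefix_succ_of_eq_zero hzero, sub_self]

theorem zeroPrefix_self (x : CubeB n) : zeroPrefix x n = cubeOrigin n := by
  ext j
  simp [zeroPrefix, cubeOrigin]

theorem coneCube_of_mid {x : CubeB n} {i : Fin n} (h : x i = CubeF.mid) :
    coneCube x i = zeroPrefix x i :=
  update_eq_self_iff.mpr (by simp [zeroPrefix, h])

theorem coneCube_update_of_lt {x : CubeB n} {i q : Fin n} (h : i < q) (c : CubeF) :
    coneCube (update x q c) i = update (coneCube x i) q c := by
  have h' : (i : ℕ) < q := h
  ext j
  simp only [coneCube, zeroPrefix, Function.update_apply, Fin.ext_iff]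
  split_ifs <;> first | rfl | omega

theorem coneCube_update_of_le {x : CubeB n} {i q : Fin n} (h : q ≤ i) (c : CubeF) :
    coneCube (update x q c) i = coneCube x i := by
  have h' : (q : ℕ) ≤ i := h
  ext j
  simp only [coneCube, zeroPrefix, Function.update_apply, Fin.ext_iff]
  split_ifs <;> first | rfl | omega

theorem mem_coneIdx_update_of_lt {x : CubeB n} {i q : Fin n} (h : i < q) (c : CubeF) :
    i ∈ coneIdx (update x q c) ↔ i ∈ coneIdx x := by
  simp only [mem_coneIdx, update_of_ne h.ne]
  exact and_congr_right fun _ => forall₂_congr fun j hj => by rw [update_of_ne (hj.trans h).ne]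

theorem mem_coneIdx_update_one_iff_zero {x : CubeB n} {i q : Fin n} (h : q < i) :
    i ∈ coneIdx (update x q CubeF.one) ↔ i ∈ coneIdx (update x q CubeF.zero) := by
  simp only [mem_coneIdx, update_of_ne h.ne']
  refine and_congr_right fun _ => forall₂_congr fun j _ => ?_
  by_cases hj : j = q
  · subst hj; simp
  · rw [update_of_ne hj, update_of_ne hj]

theorem cubeConeFun_eq_sum_univ (x : CubeB n) :
    cubeConeFun n x = ∑ i, if i ∈ coneIdx x then single (coneCube x i) 1 else 0 := by
  rw [Finset.sum_ite_mem, Finset.univ_inter, cubeConeFun]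

/-- Cells `i > q` are the same for both faces and cancel; the face `[1]` at `q` is itself a cone
cell exactly when `q` is the first `[0,1]`-factor. -/
theorem cubeCone_faceDiff {x : CubeB n} {q : Fin n} (hq : x q = CubeF.mid) :
    cubeCone n (faceDiff x q) =
      (if ∀ j < q, x j ≠ CubeF.mid then single (coneCube x q) 1 else 0) +
        ∑ i ∈ coneIdx x, faceDiff (coneCube x i) q := by
  have hterm : ∀ i : Fin n,
      ((if i ∈ coneIdx (update x q CubeF.one) then
          single (coneCube (update x q CubeF.one) i) (1 : ℤ) else 0) -
        if i ∈ coneIdx (update x q CubeF.zero) then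
          single (coneCube (update x q CubeF.zero) i) 1 else 0) =
      (if i = q then (if ∀ j < q, x j ≠ CubeF.mid then single (coneCube x q) 1 else 0) else 0) +
        if i ∈ coneIdx x then faceDiff (coneCube x i) q else 0 := by
    intro i
    rcases lt_trichotomy i q with h | rfl | h
    · simp only [mem_coneIdx_update_of_lt h, coneCube_update_of_lt h, if_neg h.ne, zero_add]
      split_ifs <;> simp [faceDiff]
    · have hnot : i ∉ coneIdx x := fun hi => (lt_of_mem_coneIdx hi hq).false
      have h1 : i ∈ coneIdx (update x i CubeF.one) ↔ ∀ j < i, x j ≠ CubeF.mid := by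
        simp only [mem_coneIdx, Function.update_self, true_and]
        exact forall₂_congr fun j hj => by rw [update_of_ne hj.ne]
      have h0 : i ∉ coneIdx (update x i CubeF.zero) := by simp
      rw [if_neg h0, sub_zero, if_pos rfl, if_neg hnot, add_zero, coneCube_update_of_le le_rfl]
      exact if_congr h1 rfl rfl
    · have hnot : i ∉ coneIdx x := fun hi => ((mem_coneIdx.mp hi).2 q h hq)
      simp only [mem_coneIdx_update_one_iff_zero h, coneCube_update_of_le h.le, sub_self,
        if_neg h.ne', if_neg hnot, add_zero]
  rw [faceDiff, map_sub, cubeCone_single, cubeCone_single, cubeConeFun_eq_sum_univ,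
    cubeConeFun_eq_sum_univ, ← Finset.sum_sub_distrib, Finset.sum_congr rfl fun i _ => hterm i,
    Finset.sum_add_distrib, Finset.sum_ite_eq', if_pos (Finset.mem_univ q), Finset.sum_ite_mem,
    Finset.univ_inter]

theorem cubeBd_cubeConeFun (x : CubeB n) :
    cubeBd n (cubeConeFun n x) =
      ∑ i ∈ coneIdx x, (single (zeroPrefix x i) (1 : ℤ) - single (zeroPrefix x (i + 1)) 1) -
        ∑ i ∈ coneIdx x, ∑ q ∈ mids x,
          (-1 : ℤ) ^ ((mids x).filter (· < q)).card • faceDiff (coneCube x i) q := by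
  rw [cubeConeFun, map_sum, ← Finset.sum_sub_distrib]
  exact Finset.sum_congr rfl fun i hi => by rw [cubeBd_single, cubeBdFun_coneCube hi]

theorem cubeCone_cubeBdFun (x : CubeB n) :
    cubeCone n (cubeBdFun n x) =
      (if h : (mids x).Nonempty then single (zeroPrefix x ((mids x).min' h)) 1 else 0) +
        ∑ i ∈ coneIdx x, ∑ q ∈ mids x,
          (-1 : ℤ) ^ ((mids x).filter (· < q)).card • faceDiff (coneCube x i) q := by
  have hterm : ∀ q ∈ mids x,
      cubeCone n ((-1 : ℤ) ^ ((mids x).filter (· < q)).card • faceDiff x q) =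
        (-1 : ℤ) ^ ((mids x).filter (· < q)).card •
          (if ∀ j < q, x j ≠ CubeF.mid then single (coneCube x q) 1 else 0) +
        ∑ i ∈ coneIdx x, (-1 : ℤ) ^ ((mids x).filter (· < q)).card • faceDiff (coneCube x i) q :=
    fun q hq => by rw [map_smul, cubeCone_faceDiff (mem_mids.mp hq), smul_add, Finset.smul_sum]
  rw [cubeBdFun_eq, map_sum, Finset.sum_congr rfl hterm, Finset.sum_add_distrib,
    Finset.sum_comm (s := mids x)]
  congr 1
  split_ifs with hM
  · set qf := (mids x).min' hM
    have hqf : x qf = CubeF.mid := mem_mids.mp ((mids x).min'_mem hM)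
    have hfirst : ∀ j < qf, x j ≠ CubeF.mid := fun j hj h =>
      ((mids x).min'_le j (mem_mids.mpr h)).not_gt hj
    rw [Finset.sum_eq_single_of_mem qf ((mids x).min'_mem hM) fun q hq hne => ?_]
    · rw [if_pos hfirst, Finset.card_eq_zero.mpr (Finset.filter_eq_empty_iff.mpr fun r hr hlt =>
        hfirst r hlt (mem_mids.mp hr)), pow_zero, one_smul, coneCube_of_mid hqf]
    · rw [if_neg fun h => h qf (lt_of_le_of_ne ((mids x).min'_le q hq) (Ne.symm hne)) hqf,
        smul_zero]
  · rw [Finset.not_nonempty_iff_eq_empty.mp hM, Finset.sum_empty]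

theorem cubeBd_cubeConeFun_add (x : CubeB n) :
    cubeBd n (cubeConeFun n x) + cubeCone n (cubeBdFun n x) =
      single x 1 - cubeEps n (single x 1) • single (cubeOrigin n) 1 := by
  rw [cubeBd_cubeConeFun, cubeCone_cubeBdFun, sub_add_add_cancel, cubeEps_single,
    cubeDeg_eq_card_mids]
  split_ifs with hM hdeg hdeg
  · exact absurd hdeg hM.card_pos.ne'
  · have hqf : x ((mids x).min' hM) = CubeF.mid := mem_mids.mp ((mids x).min'_mem hM)
    rw [sum_coneIdx_telescope ((mids x).min' hM).isLt.le
        (fun j hj h => ((mids x).min'_le j (mem_mids.mpr h)).not_gt hj)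
        fun i hi => lt_of_mem_coneIdx hi hqf,
      zero_smul, sub_zero, sub_add_cancel]
  · rw [sum_coneIdx_telescope le_rfl (fun j _ h => hM ⟨j, mem_mids.mpr h⟩) fun i _ => i.isLt,
      zeroPrefix_self, one_smul, add_zero]
  · exact absurd (Finset.card_eq_zero.mpr (Finset.not_nonempty_iff_eq_empty.mp hM)) hdeg

theorem cubeBd_cubeCone_add (c : CubeChain n) :
    cubeBd n (cubeCone n c) + cubeCone n (cubeBd n c) =
      c - cubeEps n c • single (cubeOrigin n) 1 := by
  have h : (cubeBd n).comp (cubeCone n) + (cubeCone n).comp (cubeBd n) =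
      LinearMap.id - (cubeEps n).smulRight (single (cubeOrigin n) 1) := by
    refine Finsupp.lhom_ext' fun x => LinearMap.ext_ring ?_
    simpa [cubeCone_single, cubeBd_single] using cubeBd_cubeConeFun_add x
  exact LinearMap.congr_fun h c

theorem cubeCone_homog {m : ℕ} {c : CubeChain n} (hc : cubeHomog n m c) :
    cubeHomog n (m + 1) (cubeCone n c) := by
  refine Finsupp.forall_mem_support_lift _ fun x hx y hy => ?_
  obtain ⟨i, hi, hy⟩ := Finset.mem_biUnion.mp (Finsupp.support_finsetSum hy)
  rw [Finset.mem_singleton.mp (support_single_subset hy), cubeDeg_coneCube hi, hc x hx]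

theorem cubeHomog_simpEps_smul_cubeOrigin {m : ℕ} {z : SimpChain n} (hz : simpHomog n m z) :
    cubeHomog n m (simpEps n z • single (cubeOrigin n) 1) := by
  intro x hx
  rcases m with _ | m
  · rw [Finset.mem_singleton.mp (support_single_subset (support_smul hx)),
      cubeDeg_eq_card_mids, mids_cubeOrigin, Finset.card_empty]
  · have : simpEps n z = 0 := by
      rw [simpEps, lift_apply]
      exact Finset.sum_eq_zero fun s hs => by simp [hz s hs]
    simp [this] at hx

end CartanSerre

open CartanSerre in
/-- The Cartan–Serre map `CS : C(□^n) → C(Δ^n)` is a quasi-isomorphism: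
it is a degree-preserving chain map and the induced map on homology is an isomorphism in
every degree `m` (surjective and injective modulo boundaries). -/
theorem cartanSerre_quasi_isomorphism (n : ℕ) :
    (∀ c : CubeChain n, simpBd n (csL n c) = csL n (cubeBd n c)) ∧
    (∀ (m : ℕ) (c : CubeChain n), cubeHomog n m c → simpHomog n m (csL n c)) ∧
    ∀ m : ℕ,
      (∀ z : SimpChain n, simpHomog n m z → simpBd n z = 0 →
        ∃ c : CubeChain n, cubeHomog n m c ∧ cubeBd n c = 0 ∧
          ∃ b : SimpChain n, simpHomog n (m + 1) b ∧ csL n c - z = simpBd n b) ∧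
      (∀ c : CubeChain n, cubeHomog n m c → cubeBd n c = 0 →
        (∃ b : SimpChain n, simpHomog n (m + 1) b ∧ csL n c = simpBd n b) →
        ∃ a : CubeChain n, cubeHomog n (m + 1) a ∧ c = cubeBd n a) := by
  refine ⟨simpBd_csL, fun _ _ => csL_homog, fun m => ⟨fun z hz hcyc => ?_, ?_⟩⟩
  · refine ⟨simpEps n z • Finsupp.single (cubeOrigin n) 1, cubeHomog_simpEps_smul_cubeOrigin hz,
      by rw [map_smul, cubeBd_single_cubeOrigin, smul_zero], -simpCone n z, ?_, ?_⟩
    · exact fun s hs => simpCone_homog hz s (by rwa [Finsupp.support_neg] at hs)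
    · have hcontr := simpBd_simpCone_add hz
      rw [hcyc, map_zero, add_zero] at hcontr
      rw [map_smul, csL_single_cubeOrigin, map_neg, hcontr]
      abel
  · rintro c hc hcyc ⟨b, -, hb⟩
    have haug : cubeEps n c = 0 := by
      rw [← simpEps_comp_csL, LinearMap.comp_apply, hb, ← LinearMap.comp_apply,
        simpEps_comp_simpBd, LinearMap.zero_apply]
    refine ⟨cubeCone n c, cubeCone_homog hc, ?_⟩
    have hcontr := cubeBd_cubeCone_add c
    rw [hcyc, map_zero, add_zero, haug, zero_smul, sub_zero] at hcontr
    exact hcontr.symm
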